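/- For matrices (d = 2): if Y ∈ ℝ^{n₁×n₂} and H_r(Y) = U U^T Y V V^T where U, V contain the top r left and right singular vectors of Y respectively, then ‖Y − H_r(Y)‖_F ≤ √2 · min{‖Y − B‖_F : rank(B) ≤ r}. -/

import Mathlib

/-!
With `P = UUᵀ` and `Q = VVᵀ`, split `Y - PYQ = (Y - PY) + P(Y - YQ)`. Since `P` is an orthogonal
projection, the two summands are Frobenius-orthogonal and `P` does not increase the Frobenius
norm, so `‖Y - PYQ‖² ≤ ‖Y - PY‖² + ‖Y - YQ‖²`; each term is at most `‖Y - B‖²` by the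
Eckart–Young optimality of the one-sided truncations.
-/

open Matrix

noncomputable def frobNorm {p q : ℕ} (A : Matrix (Fin p) (Fin q) ℝ) : ℝ :=
  Real.sqrt (∑ i, ∑ j, (A i j) ^ 2)

section Projection

variable {m n k : Type*} {α : Type*} [CommRing α]

theorem isSymm_mul_transpose [Fintype n] (U : Matrix m n α) : (U * Uᵀ).IsSymm := by
  rw [IsSymm, transpose_mul, transpose_transpose]

theorem isIdempotentElem_mul_transpose [Fintype m] [Fintype n] [DecidableEq n] {U : Matrix m n α}
    (hU : Uᵀ * U = 1) : IsIdempotentElem (U * Uᵀ) := by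
  rw [IsIdempotentElem, Matrix.mul_assoc, ← Matrix.mul_assoc Uᵀ, hU, Matrix.one_mul]

theorem transpose_sub_mul_mul_eq_zero [Fintype m] {P : Matrix m m α} (hPsymm : P.IsSymm)
    (hPidem : IsIdempotentElem P) (A : Matrix m n α) (C : Matrix m k α) :
    (A - P * A)ᵀ * (P * C) = 0 := by
  rw [transpose_sub, transpose_mul, hPsymm.eq, Matrix.sub_mul, Matrix.mul_assoc Aᵀ P,
    ← Matrix.mul_assoc P P, hPidem.eq, sub_self]

end Projection

section Frobenius

variable {p q : ℕ}

theorem frobNorm_nonneg (A : Matrix (Fin p) (Fin q) ℝ) : 0 ≤ frobNorm A :=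
  Real.sqrt_nonneg _

theorem frobNorm_sq (A : Matrix (Fin p) (Fin q) ℝ) : frobNorm A ^ 2 = trace (Aᵀ * A) := by
  rw [frobNorm, Real.sq_sqrt (by positivity), trace, Finset.sum_comm]
  simp [mul_apply, sq]

theorem frobNorm_add_sq_of_trace_eq_zero {A C : Matrix (Fin p) (Fin q) ℝ}
    (h : trace (Aᵀ * C) = 0) : frobNorm (A + C) ^ 2 = frobNorm A ^ 2 + frobNorm C ^ 2 := by
  have h' : trace (Cᵀ * A) = 0 := by rw [← trace_transpose, transpose_mul, transpose_transpose, h]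
  simp only [frobNorm_sq, transpose_add, Matrix.add_mul, Matrix.mul_add, trace_add, h, h']
  ring

variable {P : Matrix (Fin p) (Fin p) ℝ}

theorem frobNorm_mul_le_of_isSymm_of_isIdempotentElem (hPsymm : P.IsSymm)
    (hPidem : IsIdempotentElem P) (M : Matrix (Fin p) (Fin q) ℝ) :
    frobNorm (P * M) ≤ frobNorm M := by
  have hsplit := frobNorm_add_sq_of_trace_eq_zero (A := M - P * M) (C := P * M)
    (by rw [transpose_sub_mul_mul_eq_zero hPsymm hPidem, trace_zero])
  rw [sub_add_cancel] at hsplit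
  have hsq : frobNorm (P * M) ^ 2 ≤ frobNorm M ^ 2 :=
    hsplit ▸ le_add_of_nonneg_left (sq_nonneg _)
  exact (pow_le_pow_iff_left₀ (frobNorm_nonneg _) (frobNorm_nonneg _) two_ne_zero).mp hsq

theorem frobNorm_sub_mul_mul_sq (hPsymm : P.IsSymm) (hPidem : IsIdempotentElem P)
    (Y : Matrix (Fin p) (Fin q) ℝ) (Q : Matrix (Fin q) (Fin q) ℝ) :
    frobNorm (Y - P * Y * Q) ^ 2 = frobNorm (Y - P * Y) ^ 2 + frobNorm (P * (Y - Y * Q)) ^ 2 := by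
  rw [← frobNorm_add_sq_of_trace_eq_zero (A := Y - P * Y) (C := P * (Y - Y * Q))
      (by rw [transpose_sub_mul_mul_eq_zero hPsymm hPidem, trace_zero]),
    Matrix.mul_sub, Matrix.mul_assoc P Y Q, sub_add_sub_cancel]

end Frobenius

theorem hosvd_matrix_case_general {n₁ n₂ r : ℕ}
    (Y : Matrix (Fin n₁) (Fin n₂) ℝ)
    (U : Matrix (Fin n₁) (Fin r) ℝ) (V : Matrix (Fin n₂) (Fin r) ℝ)
    (hU : Uᵀ * U = 1)
    (hUbest : ∀ B : Matrix (Fin n₁) (Fin n₂) ℝ, B.rank ≤ r →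
      frobNorm (Y - U * Uᵀ * Y) ≤ frobNorm (Y - B))
    (hVbest : ∀ B : Matrix (Fin n₁) (Fin n₂) ℝ, B.rank ≤ r →
      frobNorm (Y - Y * (V * Vᵀ)) ≤ frobNorm (Y - B)) :
    ∀ B : Matrix (Fin n₁) (Fin n₂) ℝ, B.rank ≤ r →
      frobNorm (Y - U * Uᵀ * Y * (V * Vᵀ)) ≤ Real.sqrt 2 * frobNorm (Y - B) := by
  intro B hB
  have hsymm := isSymm_mul_transpose U
  have hidem := isIdempotentElem_mul_transpose hU
  have hleft := hUbest B hB
  have hright := (frobNorm_mul_le_of_isSymm_of_isIdempotentElem hsymm hidem _).trans (hVbest B hB)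
  have hsq : frobNorm (Y - U * Uᵀ * Y * (V * Vᵀ)) ^ 2 ≤ 2 * frobNorm (Y - B) ^ 2 := by
    rw [frobNorm_sub_mul_mul_sq hsymm hidem]
    nlinarith [frobNorm_nonneg (Y - U * Uᵀ * Y), frobNorm_nonneg (U * Uᵀ * (Y - Y * (V * Vᵀ)))]
  have hrhs_nonneg := mul_nonneg (Real.sqrt_nonneg 2) (frobNorm_nonneg (Y - B))
  refine (pow_le_pow_iff_left₀ (frobNorm_nonneg _) hrhs_nonneg two_ne_zero).mp ?_
  rwa [mul_pow, Real.sq_sqrt zero_le_two]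

/-- matrix (d = 2) case of the quasi-optimality of truncated HOSVD.
`U` and `V` contain the top `r` left/right singular vectors of `Y`, which by
Eckart–Young is expressed by saying that `UUᵀY` (resp. `YVVᵀ`) is at least as
good an approximation of `Y` in Frobenius norm as any matrix of rank at most `r`.
Then `‖Y − UUᵀYVVᵀ‖_F ≤ √2 · min{‖Y − B‖_F : rank B ≤ r}`. -/
theorem hosvd_matrix_case {n₁ n₂ r : ℕ}
    (Y : Matrix (Fin n₁) (Fin n₂) ℝ)
    (U : Matrix (Fin n₁) (Fin r) ℝ) (V : Matrix (Fin n₂) (Fin r) ℝ)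
    (hU : Uᵀ * U = 1) (hV : Vᵀ * V = 1)
    (hUbest : ∀ B : Matrix (Fin n₁) (Fin n₂) ℝ, B.rank ≤ r →
      frobNorm (Y - U * Uᵀ * Y) ≤ frobNorm (Y - B))
    (hVbest : ∀ B : Matrix (Fin n₁) (Fin n₂) ℝ, B.rank ≤ r →
      frobNorm (Y - Y * (V * Vᵀ)) ≤ frobNorm (Y - B)) :
    ∀ B : Matrix (Fin n₁) (Fin n₂) ℝ, B.rank ≤ r →
      frobNorm (Y - U * Uᵀ * Y * (V * Vᵀ)) ≤ Real.sqrt 2 * frobNorm (Y - B) :=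
  hosvd_matrix_case_general Y U V hU hUbest hVbest
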